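/- arXiv:1712.01702 — 2 statements merged into one kernel-verified Lean document; each statement's English description precedes it below -/
import Mathlib

section
/- For every v ∈ H¹([a,b]) with a < b and every m > 0, one has sup_{x∈[a,b]} |v(x)| ≤ √((b−a)/(2m+3))·‖v'‖_{L²([a,b])} + ((m+1)/√((b−a)(2m+1)))·‖v‖_{L²([a,b])}. -/
/-!
At the right endpoint the inequality comes from integrating `(φ v)'` for the kernel
`φ y = ((y - a) / (b - a)) ^ (m + 1)` and applying Cauchy–Schwarz to `∫ φ' v` and `∫ φ v'`:
`‖φ‖² = (b - a) / (2m + 3)` and `‖φ'‖² = (m + 1)² / ((b - a)(2m + 1))` are exactly the two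
constants. The left endpoint follows by reflection. An interior point `x` cuts `[a, b]` into pieces
of lengths `p = x - a` and `q = b - x`; adding `p` times the bound on `[a, x]` and `q` times the
bound on `[x, b]`, then using Cauchy–Schwarz in `ℝ²` and `p³ + q³ ≤ (p + q)³`, recovers `b - a`
times the bound on `[a, b]`.
-/

open MeasureTheory Set

theorem abs_integral_mul_le_sqrt_mul_sqrt {X : Type*} [MeasurableSpace X] {μ : Measure X}
    {f g : X → ℝ} (hf : Integrable (fun x => f x ^ 2) μ) (hg : Integrable (fun x => g x ^ 2) μ)
    (hfg : Integrable (fun x => f x * g x) μ) :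
    |∫ x, f x * g x ∂μ| ≤ √(∫ x, f x ^ 2 ∂μ) * √(∫ x, g x ^ 2 ∂μ) := by
  set F := ∫ x, f x ^ 2 ∂μ
  set G := ∫ x, g x ^ 2 ∂μ
  set Z := ∫ x, f x * g x ∂μ
  have hquad : ∀ t : ℝ, 0 ≤ F * (t * t) + 2 * Z * t + G := by
    intro t
    have hexp : ∫ x, (t * f x + g x) ^ 2 ∂μ = F * (t * t) + 2 * Z * t + G := by
      rw [show F * (t * t) + 2 * Z * t + G
          = ∫ x, (t * t * f x ^ 2 + 2 * t * (f x * g x)) + g x ^ 2 ∂μ by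
        rw [integral_add (f := fun x => t * t * f x ^ 2 + 2 * t * (f x * g x))
            ((hf.const_mul _).add (hfg.const_mul _)) hg,
          integral_add (hf.const_mul _) (hfg.const_mul _), integral_const_mul, integral_const_mul]
        ring]
      congr 1 with x
      ring
    exact hexp ▸ integral_nonneg fun x => sq_nonneg _
  have hZ : Z ^ 2 ≤ F * G := by
    have := discrim_le_zero hquad
    rw [discrim] at this
    linarith
  calc |Z| = √(Z ^ 2) := (Real.sqrt_sq_eq_abs Z).symm
    _ ≤ √(F * G) := Real.sqrt_le_sqrt hZ
    _ = √F * √G := Real.sqrt_mul (integral_nonneg fun x => sq_nonneg _) G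

theorem abs_intervalIntegral_mul_le_sqrt_mul_sqrt {α β : ℝ} (h : α ≤ β) {f g : ℝ → ℝ}
    (hf : IntervalIntegrable (fun x => f x ^ 2) volume α β)
    (hg : IntervalIntegrable (fun x => g x ^ 2) volume α β)
    (hfg : IntervalIntegrable (fun x => f x * g x) volume α β) :
    |∫ x in α..β, f x * g x| ≤ √(∫ x in α..β, f x ^ 2) * √(∫ x in α..β, g x ^ 2) := by
  simpa only [intervalIntegral.integral_of_le h] using
    abs_integral_mul_le_sqrt_mul_sqrt hf.1 hg.1 hfg.1

theorem sqrt_mul_sqrt_add_sqrt_mul_sqrt_le {a b c d : ℝ} (ha : 0 ≤ a) (hb : 0 ≤ b) (hc : 0 ≤ c)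
    (hd : 0 ≤ d) : √a * √b + √c * √d ≤ √(a + c) * √(b + d) := by
  simpa [Fin.sum_univ_two, Fin.forall_fin_two, ha, hb, hc, hd] using
    Real.sum_sqrt_mul_sqrt_le Finset.univ (f := ![a, c]) (g := ![b, d])

theorem IntervalIntegrable.of_sq_of_hasDerivAt {α β : ℝ} (h : α ≤ β) {v v' : ℝ → ℝ}
    (hv : ∀ y ∈ Icc α β, HasDerivAt v (v' y) y)
    (hv' : IntervalIntegrable (fun y => v' y ^ 2) volume α β) :
    IntervalIntegrable v' volume α β := by
  rw [intervalIntegrable_iff_integrableOn_Ioc_of_le h] at hv' ⊢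
  -- `v'` agrees with the measurable function `deriv v` on `(α, β]`
  have hmeas : AEStronglyMeasurable v' (volume.restrict (Ioc α β)) := by
    refine (measurable_deriv v).aestronglyMeasurable.congr ?_
    filter_upwards [ae_restrict_mem measurableSet_Ioc] with y hy
    exact (hv y (Ioc_subset_Icc_self hy)).deriv
  exact ((memLp_two_iff_integrable_sq hmeas).2 hv').integrable one_le_two

theorem abs_mul_sub_mul_le_of_hasDerivAt {α β : ℝ} (h : α ≤ β) {φ φ' v v' : ℝ → ℝ}
    (hφ : ∀ y ∈ Icc α β, HasDerivAt φ (φ' y) y) (hφ' : ContinuousOn φ' (Icc α β))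
    (hv : ∀ y ∈ Icc α β, HasDerivAt v (v' y) y)
    (hv2 : IntervalIntegrable (fun y => v y ^ 2) volume α β)
    (hv'2 : IntervalIntegrable (fun y => v' y ^ 2) volume α β) :
    |φ β * v β - φ α * v α| ≤
      √(∫ y in α..β, φ' y ^ 2) * √(∫ y in α..β, v y ^ 2) +
        √(∫ y in α..β, φ y ^ 2) * √(∫ y in α..β, v' y ^ 2) := by
  have hφc : ContinuousOn φ (Icc α β) := fun y hy => (hφ y hy).continuousAt.continuousWithinAt
  have hvc : ContinuousOn v (Icc α β) := fun y hy => (hv y hy).continuousAt.continuousWithinAt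
  have hv' := IntervalIntegrable.of_sq_of_hasDerivAt h hv hv'2
  rw [← uIcc_of_le h] at hφ hφ' hv hφc hvc
  have hparts := intervalIntegral.integral_mul_deriv_eq_deriv_mul hφ hv hφ'.intervalIntegrable hv'
  calc |φ β * v β - φ α * v α|
      = |(∫ y in α..β, φ' y * v y) + ∫ y in α..β, φ y * v' y| := by rw [hparts]; ring_nf
    _ ≤ |∫ y in α..β, φ' y * v y| + |∫ y in α..β, φ y * v' y| := abs_add_le _ _
    _ ≤ _ := add_le_add
        (abs_intervalIntegral_mul_le_sqrt_mul_sqrt h (hφ'.pow 2).intervalIntegrable hv2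
          (hφ'.mul hvc).intervalIntegrable)
        (abs_intervalIntegral_mul_le_sqrt_mul_sqrt h (hφc.pow 2).intervalIntegrable hv'2
          (hv'.continuousOn_mul hφc))

theorem integral_div_sub_rpow {α β : ℝ} (h : α < β) {r : ℝ} (hr : -1 < r) :
    ∫ y in α..β, ((y - α) / (β - α)) ^ r = (β - α) / (r + 1) := by
  have hℓ : β - α ≠ 0 := (sub_pos.2 h).ne'
  have hsplit : ∀ y, (y - α) / (β - α) = y / (β - α) - α / (β - α) := fun y => sub_div _ _ _
  simp_rw [hsplit]
  rw [intervalIntegral.integral_comp_div_sub (fun t : ℝ => t ^ r) hℓ, sub_self, ← hsplit,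
    div_self hℓ, integral_rpow (Or.inl hr), Real.zero_rpow (by linarith), Real.one_rpow,
    smul_eq_mul]
  ring

theorem integral_sq_mul_div_sub_rpow {α β : ℝ} (h : α < β) (c : ℝ) {e : ℝ} (he : -1 / 2 < e) :
    ∫ y in α..β, (c * ((y - α) / (β - α)) ^ e) ^ 2 = c ^ 2 * (β - α) / (2 * e + 1) := by
  have hsq : EqOn (fun y => (c * ((y - α) / (β - α)) ^ e) ^ 2)
      (fun y => c ^ 2 * ((y - α) / (β - α)) ^ (2 * e)) (uIcc α β) := by
    intro y hy
    rw [uIcc_of_le h.le] at hy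
    have ht : 0 ≤ (y - α) / (β - α) := div_nonneg (by linarith [hy.1]) (by linarith)
    simp only
    rw [mul_pow, mul_comm 2 e, Real.rpow_mul ht, Real.rpow_two]
  rw [intervalIntegral.integral_congr hsq, intervalIntegral.integral_const_mul,
    integral_div_sub_rpow h (by linarith)]
  ring

/- Multiplied through by `β - α`, the endpoint bound also holds for `α = β`, so the interior case
can apply it to `[a, x]` and `[x, b]` without treating `x = a` or `x = b` separately. -/
theorem sub_mul_abs_le_of_hasDerivAt_right {α β m : ℝ} (h : α ≤ β) (hm : 0 ≤ m) {v v' : ℝ → ℝ}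
    (hv : ∀ y ∈ Icc α β, HasDerivAt v (v' y) y)
    (hv2 : IntervalIntegrable (fun y => v y ^ 2) volume α β)
    (hv'2 : IntervalIntegrable (fun y => v' y ^ 2) volume α β) :
    (β - α) * |v β| ≤ √((β - α) ^ 3 / (2 * m + 3)) * √(∫ y in α..β, v' y ^ 2) +
      (m + 1) * √((β - α) / (2 * m + 1)) * √(∫ y in α..β, v y ^ 2) := by
  rcases h.eq_or_lt with rfl | h
  · simp
  have hℓ : β - α ≠ 0 := (sub_pos.2 h).ne'
  have hφ : ∀ y ∈ Icc α β, HasDerivAt (fun y => (β - α) * ((y - α) / (β - α)) ^ (m + 1))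
      ((m + 1) * ((y - α) / (β - α)) ^ m) y := by
    intro y _
    have := (((hasDerivAt_id y).sub_const α).div_const (β - α)).rpow_const
      (p := m + 1) (Or.inr (by linarith)) |>.const_mul (β - α)
    refine this.congr_deriv ?_
    simp only [id, add_sub_cancel_right]
    field_simp
  have hφ' : Continuous fun y => (m + 1) * ((y - α) / (β - α)) ^ m := by
    fun_prop (disch := positivity)
  have key := abs_mul_sub_mul_le_of_hasDerivAt h.le hφ hφ'.continuousOn hv hv2 hv'2
  rw [integral_sq_mul_div_sub_rpow h _ (by linarith),
    integral_sq_mul_div_sub_rpow h _ (by linarith)] at key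
  have hβ : (β - α) * ((β - α) / (β - α)) ^ (m + 1) = β - α := by
    rw [div_self hℓ, Real.one_rpow, mul_one]
  have hα : (β - α) * ((α - α) / (β - α)) ^ (m + 1) = 0 := by
    rw [sub_self, zero_div, Real.zero_rpow (by linarith), mul_zero]
  have hφ'2 : √((m + 1) ^ 2 * (β - α) / (2 * m + 1)) = (m + 1) * √((β - α) / (2 * m + 1)) := by
    rw [mul_div_assoc, Real.sqrt_mul (sq_nonneg _), Real.sqrt_sq (by linarith)]
  have hφ2 : (β - α) ^ 2 * (β - α) / (2 * (m + 1) + 1) = (β - α) ^ 3 / (2 * m + 3) := by ring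
  rw [hβ, hα, zero_mul, sub_zero, abs_mul, abs_of_pos (sub_pos.2 h), hφ'2, hφ2] at key
  linarith

theorem sub_mul_abs_le_of_hasDerivAt_left {α β m : ℝ} (h : α ≤ β) (hm : 0 ≤ m) {v v' : ℝ → ℝ}
    (hv : ∀ y ∈ Icc α β, HasDerivAt v (v' y) y)
    (hv2 : IntervalIntegrable (fun y => v y ^ 2) volume α β)
    (hv'2 : IntervalIntegrable (fun y => v' y ^ 2) volume α β) :
    (β - α) * |v α| ≤ √((β - α) ^ 3 / (2 * m + 3)) * √(∫ y in α..β, v' y ^ 2) +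
      (m + 1) * √((β - α) / (2 * m + 1)) * √(∫ y in α..β, v y ^ 2) := by
  have hrefl := sub_mul_abs_le_of_hasDerivAt_right (neg_le_neg h) hm (v := fun y => v (-y))
    (v' := fun y => -v' (-y))
    (fun y hy => ((hv (-y) ⟨le_neg.1 hy.2, neg_le.1 hy.1⟩).comp y (hasDerivAt_neg y)).congr_deriv
      (mul_neg_one _))
    ((IntervalIntegrable.iff_comp_neg).1 hv2).symm
    (by simpa using ((IntervalIntegrable.iff_comp_neg).1 hv'2).symm)
  simpa [intervalIntegral.integral_comp_neg (fun y => v y ^ 2),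
    intervalIntegral.integral_comp_neg (fun y => v' y ^ 2), sub_eq_add_neg, add_comm] using hrefl

theorem add_mul_le_of_mul_le_sqrt_mul_sqrt {p q A c k k' V₁ V₂ W₁ W₂ : ℝ} (hp : 0 ≤ p)
    (hq : 0 ≤ q) (hc : 0 ≤ c) (hk : 0 ≤ k) (hk' : 0 ≤ k') (hV₁ : 0 ≤ V₁) (hV₂ : 0 ≤ V₂)
    (hW₁ : 0 ≤ W₁) (hW₂ : 0 ≤ W₂)
    (h₁ : p * A ≤ √(p ^ 3 / k) * √W₁ + c * √(p / k') * √V₁)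
    (h₂ : q * A ≤ √(q ^ 3 / k) * √W₂ + c * √(q / k') * √V₂) :
    (p + q) * A ≤ √((p + q) ^ 3 / k) * √(W₁ + W₂) + c * √((p + q) / k') * √(V₁ + V₂) := by
  have hW := sqrt_mul_sqrt_add_sqrt_mul_sqrt_le (div_nonneg (pow_nonneg hp 3) hk) hW₁
    (div_nonneg (pow_nonneg hq 3) hk) hW₂
  have hV := sqrt_mul_sqrt_add_sqrt_mul_sqrt_le (div_nonneg hp hk') hV₁ (div_nonneg hq hk') hV₂
  rw [← add_div] at hW hV
  have hcube : (p ^ 3 + q ^ 3) / k ≤ (p + q) ^ 3 / k := by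
    gcongr
    exact pow_add_pow_le hp hq three_ne_zero
  calc (p + q) * A = p * A + q * A := by ring
    _ ≤ √((p ^ 3 + q ^ 3) / k) * √(W₁ + W₂) + c * √((p + q) / k') * √(V₁ + V₂) := by
      linarith [mul_le_mul_of_nonneg_left hV hc]
    _ ≤ _ := by gcongr

theorem sub_mul_abs_le_of_hasDerivAt {α β m x : ℝ} (hx : x ∈ Icc α β) (hm : 0 ≤ m)
    {v v' : ℝ → ℝ} (hv : ∀ y ∈ Icc α β, HasDerivAt v (v' y) y)
    (hv2 : IntervalIntegrable (fun y => v y ^ 2) volume α β)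
    (hv'2 : IntervalIntegrable (fun y => v' y ^ 2) volume α β) :
    (β - α) * |v x| ≤ √((β - α) ^ 3 / (2 * m + 3)) * √(∫ y in α..β, v' y ^ 2) +
      (m + 1) * √((β - α) / (2 * m + 1)) * √(∫ y in α..β, v y ^ 2) := by
  obtain ⟨hαx, hxβ⟩ := hx
  have hx' : x ∈ uIcc α β := by rw [uIcc_of_le (hαx.trans hxβ)]; exact ⟨hαx, hxβ⟩
  have hleft := sub_mul_abs_le_of_hasDerivAt_right hαx hm
    (fun y hy => hv y (Icc_subset_Icc_right hxβ hy))
    (hv2.mono_set (uIcc_subset_uIcc_left hx')) (hv'2.mono_set (uIcc_subset_uIcc_left hx'))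
  have hright := sub_mul_abs_le_of_hasDerivAt_left hxβ hm
    (fun y hy => hv y (Icc_subset_Icc_left hαx hy))
    (hv2.mono_set (uIcc_subset_uIcc_right hx')) (hv'2.mono_set (uIcc_subset_uIcc_right hx'))
  rw [← intervalIntegral.integral_add_adjacent_intervals
      (hv2.mono_set (uIcc_subset_uIcc_left hx')) (hv2.mono_set (uIcc_subset_uIcc_right hx')),
    ← intervalIntegral.integral_add_adjacent_intervals
      (hv'2.mono_set (uIcc_subset_uIcc_left hx')) (hv'2.mono_set (uIcc_subset_uIcc_right hx')),
    show β - α = (x - α) + (β - x) by ring]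
  have hsq_nonneg : ∀ (f : ℝ → ℝ) {s t : ℝ}, s ≤ t → 0 ≤ ∫ y in s..t, f y ^ 2 :=
    fun f _ _ h => intervalIntegral.integral_nonneg h fun _ _ => sq_nonneg _
  exact add_mul_le_of_mul_le_sqrt_mul_sqrt (sub_nonneg.2 hαx) (sub_nonneg.2 hxβ) (by linarith)
    (by linarith) (by linarith) (hsq_nonneg v hαx) (hsq_nonneg v hxβ) (hsq_nonneg v' hαx)
    (hsq_nonneg v' hxβ) hleft hright

/-- Kato's inequality (IV.1.19): for `v ∈ H¹([a,b])` and `m > 0`,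
`sup_{[a,b]} |v| ≤ √((b−a)/(2m+3))‖v'‖_{L²} + ((m+1)/√((b−a)(2m+1)))‖v‖_{L²}`. -/
theorem stmt4 (a b m : ℝ) (hab : a < b) (hm : 0 < m) (v v' : ℝ → ℝ)
    (hderiv : ∀ x ∈ Set.Icc a b, HasDerivAt v (v' x) x)
    (hv : IntervalIntegrable (fun t => (v t) ^ 2) volume a b)
    (hv' : IntervalIntegrable (fun t => (v' t) ^ 2) volume a b) :
    ∀ x ∈ Set.Icc a b, |v x| ≤
      Real.sqrt ((b - a) / (2 * m + 3)) * Real.sqrt (∫ t in a..b, (v' t) ^ 2) +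
        (m + 1) / Real.sqrt ((b - a) * (2 * m + 1)) * Real.sqrt (∫ t in a..b, (v t) ^ 2) := by
  intro x hx
  have hs : 0 < b - a := sub_pos.2 hab
  have hcoef₁ : √((b - a) ^ 3 / (2 * m + 3)) = (b - a) * √((b - a) / (2 * m + 3)) := by
    rw [show (b - a) ^ 3 / (2 * m + 3) = (b - a) ^ 2 * ((b - a) / (2 * m + 3)) by ring,
      Real.sqrt_mul (sq_nonneg _), Real.sqrt_sq hs.le]
  have hcoef₂ : √((b - a) / (2 * m + 1)) = (b - a) / √((b - a) * (2 * m + 1)) := by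
    rw [eq_div_iff (by positivity), ← Real.sqrt_mul (by positivity),
      show (b - a) / (2 * m + 1) * ((b - a) * (2 * m + 1)) = (b - a) ^ 2 by field_simp,
      Real.sqrt_sq hs.le]
  have hscaled := sub_mul_abs_le_of_hasDerivAt hx hm.le hderiv hv hv'
  rw [hcoef₁, hcoef₂] at hscaled
  refine le_of_mul_le_mul_left (hscaled.trans_eq ?_) hs
  ring
end

section
/- Let A be a self-adjoint lower semibounded operator on a Hilbert space H with associated closed quadratic form t_A, and let t be a symmetric quadratic form with dom(t_A) ⊆ dom(t) satisfying |t[f]| ≤ a·t_A[f] + b·‖f‖² for all f ∈ dom(t_A), with constants 0 < a < 1 and b > 0. Then the form t₁ := t_A + t on dom(t_A) is closed and lower semibounded. -/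
/-- A quadratic form `s` on the domain `D` is lower semibounded by `-c`. -/
def IsLowerBoundedForm {H : Type*} [NormedAddCommGroup H] [InnerProductSpace ℂ H]
    (D : Submodule ℂ H) (s : D → ℝ) (c : ℝ) : Prop :=
  ∀ f : D, -c * ‖(f : H)‖ ^ 2 ≤ s f

/-- The form norm `(s[f] + (c+1)‖f‖²)^{1/2}` associated with a form `s ≥ -c`. -/
noncomputable def formNorm {H : Type*} [NormedAddCommGroup H] [InnerProductSpace ℂ H]
    (D : Submodule ℂ H) (s : D → ℝ) (c : ℝ) (f : D) : ℝ :=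
  Real.sqrt (s f + (c + 1) * ‖(f : H)‖ ^ 2)

/-- A form `s ≥ -c` on `D` is closed: `D` is complete with respect to the form norm. -/
def IsClosedForm {H : Type*} [NormedAddCommGroup H] [InnerProductSpace ℂ H]
    (D : Submodule ℂ H) (s : D → ℝ) (c : ℝ) : Prop :=
  ∀ f : ℕ → D,
    (∀ ε > (0 : ℝ), ∃ N : ℕ, ∀ p ≥ N, ∀ q ≥ N, formNorm D s c (f p - f q) < ε) →
    ∃ g : D, Filter.Tendsto (fun n => formNorm D s c (f n - g)) Filter.atTop (nhds 0)

/-!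
If `s ≥ -c` and `|t| ≤ a s + b ‖·‖²` with `0 ≤ a < 1`, then for `c' = (1 - a) c + b` the quantities
`s f + (c + 1) ‖f‖²` and `(s + t) f + (c' + 1) ‖f‖²` bound each other up to constant factors
(the lower one being `1 - a`). So the two form norms are equivalent, and completeness of the
domain transfers from `s` to `s + t`.
-/

section FormNorm

variable {H : Type*} [NormedAddCommGroup H] [InnerProductSpace ℂ H] {D : Submodule ℂ H}
  {s s' : D → ℝ} {c c' : ℝ}

lemma IsLowerBoundedForm.sq_norm_le (hs : IsLowerBoundedForm D s c) (f : D) :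
    ‖(f : H)‖ ^ 2 ≤ s f + (c + 1) * ‖(f : H)‖ ^ 2 := by
  have := hs f
  linarith

lemma formNorm_le_sqrt_mul_formNorm {k : ℝ} (hk : 0 ≤ k) {f : D}
    (h : s f + (c + 1) * ‖(f : H)‖ ^ 2 ≤ k * (s' f + (c' + 1) * ‖(f : H)‖ ^ 2)) :
    formNorm D s c f ≤ √k * formNorm D s' c' f := by
  rw [formNorm, formNorm, ← Real.sqrt_mul hk]
  exact Real.sqrt_le_sqrt h

lemma IsClosedForm.of_formNorm_le (hs : IsClosedForm D s c) {k₁ k₂ : ℝ}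
    (h₁ : ∀ f, formNorm D s c f ≤ k₁ * formNorm D s' c' f)
    (h₂ : ∀ f, formNorm D s' c' f ≤ k₂ * formNorm D s c f) :
    IsClosedForm D s' c' := by
  intro f hf
  have hcauchy : ∀ ε > (0 : ℝ), ∃ N : ℕ, ∀ p ≥ N, ∀ q ≥ N,
      formNorm D s c (f p - f q) < ε := by
    intro ε hε
    have hk : 0 < |k₁| + 1 := by positivity
    obtain ⟨N, hN⟩ := hf (ε / (|k₁| + 1)) (by positivity)
    refine ⟨N, fun p hp q hq => ?_⟩
    have hy : 0 ≤ formNorm D s' c' (f p - f q) := Real.sqrt_nonneg _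
    calc formNorm D s c (f p - f q)
        ≤ k₁ * formNorm D s' c' (f p - f q) := h₁ _
      _ ≤ (|k₁| + 1) * formNorm D s' c' (f p - f q) := by
          gcongr; linarith [le_abs_self k₁]
      _ < (|k₁| + 1) * (ε / (|k₁| + 1)) := by gcongr; exact hN p hp q hq
      _ = ε := mul_div_cancel₀ ε hk.ne'
  obtain ⟨g, hg⟩ := hs f hcauchy
  refine ⟨g, squeeze_zero (fun n => Real.sqrt_nonneg _) (fun n => h₂ (f n - g)) ?_⟩
  simpa using hg.const_mul k₂

end FormNorm

section Perturbation

variable {H : Type*} [NormedAddCommGroup H] [InnerProductSpace ℂ H] {D : Submodule ℂ H}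
  {s t : D → ℝ} {a b c : ℝ}

lemma IsLowerBoundedForm.add_of_abs_le (hs : IsLowerBoundedForm D s c) (ha1 : a ≤ 1)
    (ht : ∀ f : D, |t f| ≤ a * s f + b * ‖(f : H)‖ ^ 2) :
    IsLowerBoundedForm D (fun f => s f + t f) ((1 - a) * c + b) := by
  intro f
  have hsf := hs f
  have htf := (abs_le.mp (ht f)).1
  nlinarith [mul_le_mul_of_nonneg_left hsf (sub_nonneg.mpr ha1)]

lemma one_sub_mul_le_add_of_abs_le (ha0 : 0 ≤ a)
    (ht : ∀ f : D, |t f| ≤ a * s f + b * ‖(f : H)‖ ^ 2) (f : D) :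
    (1 - a) * (s f + (c + 1) * ‖(f : H)‖ ^ 2)
      ≤ s f + t f + ((1 - a) * c + b + 1) * ‖(f : H)‖ ^ 2 := by
  have htf := (abs_le.mp (ht f)).1
  nlinarith [mul_nonneg ha0 (sq_nonneg ‖(f : H)‖)]

lemma add_le_mul_of_abs_le (hs : IsLowerBoundedForm D s c)
    (ht : ∀ f : D, |t f| ≤ a * s f + b * ‖(f : H)‖ ^ 2) (f : D) :
    s f + t f + ((1 - a) * c + b + 1) * ‖(f : H)‖ ^ 2
      ≤ (1 + a + |2 * b - 2 * a * c - a|) * (s f + (c + 1) * ‖(f : H)‖ ^ 2) := by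
  have htf := (abs_le.mp (ht f)).2
  have hnorm := hs.sq_norm_le f
  have hM := mul_le_mul (le_abs_self (2 * b - 2 * a * c - a)) hnorm (sq_nonneg _) (abs_nonneg _)
  nlinarith

lemma IsClosedForm.add_of_abs_le (hc : IsClosedForm D s c) (hs : IsLowerBoundedForm D s c)
    (ha0 : 0 ≤ a) (ha1 : a < 1) (ht : ∀ f : D, |t f| ≤ a * s f + b * ‖(f : H)‖ ^ 2) :
    IsClosedForm D (fun f => s f + t f) ((1 - a) * c + b) := by
  have ha : 0 < 1 - a := sub_pos.mpr ha1
  refine hc.of_formNorm_le (fun f => formNorm_le_sqrt_mul_formNorm (inv_nonneg.mpr ha.le) ?_)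
    (fun f => formNorm_le_sqrt_mul_formNorm (by positivity) (add_le_mul_of_abs_le hs ht f))
  rw [← div_eq_inv_mul, le_div_iff₀' ha]
  exact one_sub_mul_le_add_of_abs_le ha0 ht f

end Perturbation

theorem stmt12_general {H : Type*} [NormedAddCommGroup H] [InnerProductSpace ℂ H]
    (c : ℝ)
    (D : Submodule ℂ H) (tA : D → ℝ)
    (h_lb : IsLowerBoundedForm D tA c) (h_closed : IsClosedForm D tA c)
    (t : D → ℝ) (a b : ℝ) (ha0 : 0 < a) (ha1 : a < 1)
    (hbound : ∀ f : D, |t f| ≤ a * tA f + b * ‖(f : H)‖ ^ 2) :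
    ∃ c' : ℝ, IsLowerBoundedForm D (fun f => tA f + t f) c' ∧
      IsClosedForm D (fun f => tA f + t f) c' :=
  ⟨(1 - a) * c + b, h_lb.add_of_abs_le ha1.le hbound,
    h_closed.add_of_abs_le h_lb ha0.le ha1 hbound⟩

/-- KLMN theorem: if `A` is a self-adjoint lower semibounded operator with
associated closed quadratic form `t_A` and `t` is a (real-valued, hence symmetric) form on
`dom(t_A)` with `|t[f]| ≤ a·t_A[f] + b‖f‖²`, `0 < a < 1`, `b > 0`, then the form
`t₁ = t_A + t` on `dom(t_A)` is closed and lower semibounded. -/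
theorem stmt12 {H : Type*} [NormedAddCommGroup H] [InnerProductSpace ℂ H] [CompleteSpace H]
    (A : H →ₗ.[ℂ] H) (hsa : IsSelfAdjoint A) (c : ℝ)
    (hAbd : ∀ u : A.domain, -c * ‖(u : H)‖ ^ 2 ≤ (inner ℂ (A u) ((u : H)) : ℂ).re)
    (D : Submodule ℂ H) (hAD : A.domain ≤ D) (tA : D → ℝ)
    (htA_agree : ∀ u : A.domain, tA ⟨(u : H), hAD u.2⟩ = (inner ℂ (A u) ((u : H)) : ℂ).re)
    (h_lb : IsLowerBoundedForm D tA c) (h_closed : IsClosedForm D tA c)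
    (t : D → ℝ) (a b : ℝ) (ha0 : 0 < a) (ha1 : a < 1) (hb : 0 < b)
    (hbound : ∀ f : D, |t f| ≤ a * tA f + b * ‖(f : H)‖ ^ 2) :
    ∃ c' : ℝ, IsLowerBoundedForm D (fun f => tA f + t f) c' ∧
      IsClosedForm D (fun f => tA f + t f) c' :=
  stmt12_general c D tA h_lb h_closed t a b ha0 ha1 hbound
end
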